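/- Let n ≥ 3, and set u := a_n and v := b_n^{-1} · T_{1,2} in SL_n(ℤ). Then (u v u^{-1}) · v^{-1} · (u v^{-1} u^{-1}) · v^{-1} · (u v u^{-1}) · v = b_n. -/

import Mathlib

open Matrix

/-- The `n × n` integer matrix unit `E_{i,j}`, with 1-based indices `i, j ∈ {1, …, n}`:
its `(r,s)` entry (0-based) is `1` when `r + 1 = i` and `s + 1 = j`, and `0` otherwise. -/
def matUnit (n i j : ℕ) : Matrix (Fin n) (Fin n) ℤ :=
  Matrix.of fun r s => if r.val + 1 = i ∧ s.val + 1 = j then 1 else 0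

/-- The elementary transvection `T_{i,j} = I_n + E_{i,j}` (1-based indices). -/
def Tmat (n i j : ℕ) : Matrix (Fin n) (Fin n) ℤ :=
  1 + matUnit n i j

/-- The sign `ε_n = (-1)^(n-1)`. -/
def eps (n : ℕ) : ℤ := (-1) ^ (n - 1)

/-- `a_n = Σ_{i=1}^{n-1} E_{i,i+1} + ε_n E_{n,1}`. -/
def aMat (n : ℕ) : Matrix (Fin n) (Fin n) ℤ :=
  (∑ i ∈ Finset.range (n - 1), matUnit n (i + 1) (i + 2)) + eps n • matUnit n n 1

/-- `b_n = I_n + E_{2,1}`. -/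
def bMat (n : ℕ) : Matrix (Fin n) (Fin n) ℤ :=
  1 + matUnit n 2 1

/-!
Conjugation by the signed cyclic permutation matrix `a_n` sends `E_{1,2}, E_{2,1}, E_{2,2}` to
`ε_n E_{n,1}, ε_n E_{1,n}, E_{1,1}`. Hence `v`, `u v u⁻¹`, their inverses and `b_n` all act as the
identity off the coordinates `1, 2, n`: they are images of `3 × 3` matrices under a multiplicative
map, and the identity becomes a `3 × 3` matrix identity, checked separately for `ε_n = ±1`.
-/

section Corner

variable {k m R : Type*} [DecidableEq m] [Ring R]

theorem transpose_one_submatrix_mul_one_submatrix [Fintype m] [DecidableEq k] (f : k ↪ m) :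
    ((1 : Matrix m m R).submatrix id f)ᵀ * (1 : Matrix m m R).submatrix id f = 1 := by
  ext p q
  simp [mul_apply, one_apply, f.injective.eq_iff]

theorem one_submatrix_mul_mul_transpose [Fintype k] (f : k ↪ m) (A : Matrix k k R) :
    (1 : Matrix m m R).submatrix id f * A * ((1 : Matrix m m R).submatrix id f)ᵀ =
      ∑ p, ∑ q, single (f p) (f q) (A p q) := by
  ext r s
  simp only [mul_apply, Matrix.sum_apply, Finset.sum_mul, transpose_apply, submatrix_apply,
    id_eq, one_apply, single_apply, ite_and]
  rw [Finset.sum_comm]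
  refine Finset.sum_congr rfl fun q _ => Finset.sum_congr rfl fun p _ => ?_
  split_ifs <;> simp_all

variable [Fintype k] [Fintype m] [DecidableEq k]

/-- Extends a `k × k` matrix along `f` by the identity off the image of `f`. It is multiplicative
because `Pᵀ P = 1` for the `0/1`-matrix `P` of `f`. -/
def cornerHom (f : k ↪ m) : Matrix k k R →* Matrix m m R where
  toFun M := 1 + (1 : Matrix m m R).submatrix id f * (M - 1) * ((1 : Matrix m m R).submatrix id f)ᵀ
  map_one' := by simp
  map_mul' M N := by
    set P := (1 : Matrix m m R).submatrix id f
    have hP : Pᵀ * P = 1 := transpose_one_submatrix_mul_one_submatrix f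
    have hMN : M * N - 1 = (M - 1) + (N - 1) + (M - 1) * (N - 1) := by noncomm_ring
    have key : P * (M - 1) * Pᵀ * (P * (N - 1) * Pᵀ) = P * ((M - 1) * (N - 1)) * Pᵀ := by
      simp only [Matrix.mul_assoc, ← Matrix.mul_assoc Pᵀ P, hP, Matrix.one_mul]
    rw [hMN, Matrix.mul_add, Matrix.add_mul, Matrix.mul_add, Matrix.add_mul, ← key]
    noncomm_ring

theorem cornerHom_apply (f : k ↪ m) (M : Matrix k k R) :
    cornerHom f M = 1 + ∑ p, ∑ q, single (f p) (f q) ((M - 1) p q) := by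
  simp only [cornerHom, MonoidHom.coe_mk, OneHom.coe_mk, one_submatrix_mul_mul_transpose]

end Corner

theorem cornerHom_inv_eq {k m R : Type*} [Fintype k] [Fintype m] [DecidableEq k] [DecidableEq m]
    [CommRing R] {f : k ↪ m} {M N : Matrix k k R} (h : M * N = 1) :
    (cornerHom f M)⁻¹ = cornerHom f N :=
  inv_eq_right_inv (by rw [← map_mul, h, map_one])

theorem inv_conj_eq_conj_inv {n α : Type*} [Fintype n] [DecidableEq n] [CommRing α]
    {A : Matrix n n α} (hA : IsUnit A.det) (B : Matrix n n α) :
    (A * B * A⁻¹)⁻¹ = A * B⁻¹ * A⁻¹ := by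
  rw [Matrix.mul_inv_rev, Matrix.mul_inv_rev, nonsing_inv_nonsing_inv _ hA, Matrix.mul_assoc]

theorem matUnit_mul_matUnit (n i j k l : ℕ) :
    matUnit n i j * matUnit n k l = if j = k ∧ 1 ≤ j ∧ j ≤ n then matUnit n i l else 0 := by
  ext r s
  simp only [mul_apply, matUnit, of_apply, mul_ite, mul_one, mul_zero]
  split_ifs with h
  · obtain ⟨rfl, hj1, hjn⟩ := h
    rw [Finset.sum_eq_single ⟨j - 1, by omega⟩] <;> intros <;> simp_all [Fin.ext_iff] <;> omega
  · refine Finset.sum_eq_zero fun t _ => ?_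
    simp only [ite_eq_right_iff]
    have := t.isLt
    omega

theorem transpose_matUnit (n i j : ℕ) : (matUnit n i j)ᵀ = matUnit n j i := by
  ext r s
  simp [matUnit, and_comm]

theorem single_eq_smul_matUnit {n : ℕ} (r s : Fin n) (c : ℤ) :
    single r s c = c • matUnit n (r + 1) (s + 1) := by
  ext r' s'
  simp [single_apply, matUnit, Fin.ext_iff, eq_comm]

theorem sum_range_matUnit_diag (n : ℕ) :
    ∑ i ∈ Finset.range n, matUnit n (i + 1) (i + 1) = 1 := by
  simp_rw [Finset.sum_range, ← sum_single_one, single_eq_smul_matUnit, one_smul]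

theorem eps_mul_self (n : ℕ) : eps n * eps n = 1 := by
  rw [eps, ← pow_add, Even.neg_one_pow ⟨n - 1, rfl⟩]

theorem aMat_mul_matUnit_one {n : ℕ} (hn : 1 ≤ n) (l : ℕ) :
    aMat n * matUnit n 1 l = eps n • matUnit n n l := by
  have hsum : ∑ i ∈ Finset.range (n - 1), matUnit n (i + 1) (i + 2) * matUnit n 1 l = 0 :=
    Finset.sum_eq_zero fun i _ => by rw [matUnit_mul_matUnit, if_neg (by omega)]
  rw [aMat, Matrix.add_mul, Finset.sum_mul, hsum, zero_add, smul_mul_assoc, matUnit_mul_matUnit,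
    if_pos ⟨rfl, le_rfl, hn⟩]

theorem aMat_mul_matUnit_succ {n k : ℕ} (hk : 1 ≤ k) (hkn : k < n) (l : ℕ) :
    aMat n * matUnit n (k + 1) l = matUnit n k l := by
  have hsum : ∑ i ∈ Finset.range (n - 1), matUnit n (i + 1) (i + 2) * matUnit n (k + 1) l =
      matUnit n k l := by
    rw [Finset.sum_eq_single (k - 1)]
    · rw [matUnit_mul_matUnit, if_pos ⟨by omega, by omega, by omega⟩, Nat.sub_add_cancel hk]
    · intro i _ hi
      rw [matUnit_mul_matUnit, if_neg (by omega)]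
    · intro h
      exact absurd (Finset.mem_range.mpr (by omega)) h
  rw [aMat, Matrix.add_mul, Finset.sum_mul, hsum, smul_mul_assoc, matUnit_mul_matUnit,
    if_neg (by omega), smul_zero, add_zero]

theorem aMat_mul_transpose {n : ℕ} (hn : 1 ≤ n) : aMat n * (aMat n)ᵀ = 1 := by
  have hsum : ∑ i ∈ Finset.range (n - 1), aMat n * matUnit n (i + 2) (i + 1) =
      ∑ i ∈ Finset.range (n - 1), matUnit n (i + 1) (i + 1) :=
    Finset.sum_congr rfl fun i hi =>
      aMat_mul_matUnit_succ (k := i + 1) (by omega) (by have := Finset.mem_range.mp hi; omega) _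
  rw [aMat, transpose_add, transpose_sum, transpose_smul, ← aMat, Matrix.mul_add, Matrix.mul_sum]
  simp_rw [transpose_matUnit, mul_smul_comm, aMat_mul_matUnit_one hn, smul_smul, eps_mul_self,
    one_smul]
  rw [hsum, ← sum_range_matUnit_diag n, ← Nat.sub_add_cancel hn, Finset.sum_range_succ,
    Nat.sub_add_cancel hn]

theorem inv_aMat {n : ℕ} (hn : 1 ≤ n) : (aMat n)⁻¹ = (aMat n)ᵀ :=
  inv_eq_right_inv (aMat_mul_transpose hn)

theorem matUnit_mul_transpose_aMat_one {n : ℕ} (hn : 1 ≤ n) (k : ℕ) :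
    matUnit n k 1 * (aMat n)ᵀ = eps n • matUnit n k n := by
  have h := congrArg transpose (aMat_mul_matUnit_one hn k)
  rwa [transpose_mul, transpose_smul, transpose_matUnit, transpose_matUnit] at h

theorem matUnit_mul_transpose_aMat_succ {n k : ℕ} (hk : 1 ≤ k) (hkn : k < n) (l : ℕ) :
    matUnit n l (k + 1) * (aMat n)ᵀ = matUnit n l k := by
  have h := congrArg transpose (aMat_mul_matUnit_succ hk hkn l)
  rwa [transpose_mul, transpose_matUnit, transpose_matUnit] at h

theorem inv_bMat_mul_Tmat {n : ℕ} (hn : 1 ≤ n) :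
    (bMat n)⁻¹ * Tmat n 1 2 = 1 + matUnit n 1 2 - matUnit n 2 1 - matUnit n 2 2 := by
  have hinv : (bMat n)⁻¹ = 1 - matUnit n 2 1 := by
    refine inv_eq_right_inv ?_
    rw [bMat, Matrix.add_mul, Matrix.one_mul, Matrix.mul_sub, Matrix.mul_one, matUnit_mul_matUnit,
      if_neg (by omega), sub_zero, sub_add_cancel]
  rw [hinv, Tmat, Matrix.sub_mul, Matrix.one_mul, Matrix.mul_add, Matrix.mul_one,
    matUnit_mul_matUnit, if_pos ⟨rfl, le_rfl, hn⟩]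
  abel

theorem aMat_mul_inv_bMat_mul_Tmat_mul_inv_aMat {n : ℕ} (hn : 2 ≤ n) :
    aMat n * ((bMat n)⁻¹ * Tmat n 1 2) * (aMat n)⁻¹ =
      1 + eps n • matUnit n n 1 - eps n • matUnit n 1 n - matUnit n 1 1 := by
  have hl : ∀ l, aMat n * matUnit n 2 l = matUnit n 1 l :=
    aMat_mul_matUnit_succ (k := 1) le_rfl hn
  have hr : ∀ k, matUnit n k 2 * (aMat n)ᵀ = matUnit n k 1 :=
    matUnit_mul_transpose_aMat_succ (k := 1) le_rfl hn
  rw [inv_bMat_mul_Tmat (by omega), inv_aMat (by omega)]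
  simp only [Matrix.mul_add, Matrix.mul_sub, Matrix.add_mul, Matrix.sub_mul, Matrix.mul_one,
    aMat_mul_transpose (by omega : 1 ≤ n), aMat_mul_matUnit_one (by omega : 1 ≤ n), hl, hr,
    smul_mul_assoc, matUnit_mul_transpose_aMat_one (by omega : 1 ≤ n)]

theorem isUnit_det_aMat {n : ℕ} (hn : 1 ≤ n) : IsUnit (aMat n).det :=
  isUnit_det_of_right_inverse (aMat_mul_transpose hn)

def cornerIdx (m : ℕ) : Fin 3 ↪ Fin (m + 3) :=
  ⟨![0, 1, Fin.last (m + 2)], by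
    intro p q h
    fin_cases p <;> fin_cases q <;> simp_all [Fin.ext_iff]⟩

theorem cornerHom_cornerIdx_apply (m : ℕ) (a b c d e f g h i : ℤ) :
    cornerHom (cornerIdx m) !![a, b, c; d, e, f; g, h, i] =
      1 + (a - 1) • matUnit (m + 3) 1 1 + b • matUnit (m + 3) 1 2 + c • matUnit (m + 3) 1 (m + 3) +
        d • matUnit (m + 3) 2 1 + (e - 1) • matUnit (m + 3) 2 2 + f • matUnit (m + 3) 2 (m + 3) +
        g • matUnit (m + 3) (m + 3) 1 + h • matUnit (m + 3) (m + 3) 2 +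
        (i - 1) • matUnit (m + 3) (m + 3) (m + 3) := by
  have hidx : ∀ p, (cornerIdx m p : ℕ) + 1 = ![1, 2, m + 3] p := by
    intro p
    fin_cases p <;> rfl
  simp [cornerHom_apply, Fin.sum_univ_three, single_eq_smul_matUnit, hidx, add_assoc]

-- `v`, `v⁻¹`, `u v u⁻¹`, `u v⁻¹ u⁻¹` (with `e = ε_n`) and `b_n` on the coordinates `1, 2, n`.
def vCorner : Matrix (Fin 3) (Fin 3) ℤ := !![1, 1, 0; -1, 0, 0; 0, 0, 1]
def vInvCorner : Matrix (Fin 3) (Fin 3) ℤ := !![0, -1, 0; 1, 1, 0; 0, 0, 1]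
def xCorner (e : ℤ) : Matrix (Fin 3) (Fin 3) ℤ := !![0, 0, -e; 0, 1, 0; e, 0, 1]
def xInvCorner (e : ℤ) : Matrix (Fin 3) (Fin 3) ℤ := !![1, 0, e; 0, 1, 0; -e, 0, 0]
def bCorner : Matrix (Fin 3) (Fin 3) ℤ := !![1, 0, 0; 1, 1, 0; 0, 0, 1]

theorem vCorner_mul_vInvCorner : vCorner * vInvCorner = 1 := by decide

theorem xCorner_mul_xInvCorner {e : ℤ} (he : e * e = 1) : xCorner e * xInvCorner e = 1 := by
  obtain rfl | rfl := Int.eq_one_or_neg_one_of_mul_eq_one he <;> decide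

theorem xCorner_mul_vInvCorner_mul_xInvCorner {e : ℤ} (he : e * e = 1) :
    xCorner e * vInvCorner * xInvCorner e * vInvCorner * xCorner e * vCorner = bCorner := by
  obtain rfl | rfl := Int.eq_one_or_neg_one_of_mul_eq_one he <;> decide

/-- For `n ≥ 3`, with `u = a_n` and `v = b_n⁻¹ · T_{1,2}` in `SL_n(ℤ)`,
one has `(u v u⁻¹) · v⁻¹ · (u v⁻¹ u⁻¹) · v⁻¹ · (u v u⁻¹) · v = b_n`. -/
theorem word_recovers_bMat (n : ℕ) (hn : 3 ≤ n)
    (u v : Matrix (Fin n) (Fin n) ℤ)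
    (hu : u = aMat n) (hv : v = (bMat n)⁻¹ * Tmat n 1 2) :
    (u * v * u⁻¹) * v⁻¹ * (u * v⁻¹ * u⁻¹) * v⁻¹ * (u * v * u⁻¹) * v = bMat n := by
  obtain ⟨m, rfl⟩ := Nat.exists_eq_add_of_le' hn
  subst hu hv
  have hv : (bMat (m + 3))⁻¹ * Tmat (m + 3) 1 2 = cornerHom (cornerIdx m) vCorner := by
    rw [inv_bMat_mul_Tmat (by omega), vCorner, cornerHom_cornerIdx_apply]
    module
  have hx : aMat (m + 3) * cornerHom (cornerIdx m) vCorner * (aMat (m + 3))⁻¹ =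
      cornerHom (cornerIdx m) (xCorner (eps (m + 3))) := by
    rw [← hv, aMat_mul_inv_bMat_mul_Tmat_mul_inv_aMat (by omega), xCorner,
      cornerHom_cornerIdx_apply]
    module
  have hb : bMat (m + 3) = cornerHom (cornerIdx m) bCorner := by
    rw [bMat, bCorner, cornerHom_cornerIdx_apply]
    module
  have hε := eps_mul_self (m + 3)
  rw [← inv_conj_eq_conj_inv (isUnit_det_aMat (by omega)), hv, hx,
    cornerHom_inv_eq vCorner_mul_vInvCorner, cornerHom_inv_eq (xCorner_mul_xInvCorner hε),
    ← map_mul, ← map_mul, ← map_mul, ← map_mul, ← map_mul,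
    xCorner_mul_vInvCorner_mul_xInvCorner hε, hb]
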